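/- Let A and B be 0–1 square matrices indexed by a finite set I. Then A and B are primitively equivalent if and only if there is a finite sequence A = C_1, …, C_n = B of 0–1 square matrices indexed by I such that for every 1 ≤ i ≤ n−1 one of the following holds: C_i is a primitive transfer of C_{i+1} of size 1; C_{i+1} is a primitive transfer of C_i of size 1; or C_i = P C_{i+1} P⁻¹ for some permutation matrix P. In other words, in the definition of primitive equivalence one may restrict to primitive transfers of size 1. -/

import Mathlib

open Finset

variable {I : Type*}

/-- `A` is a 0–1 matrix. -/
def ZeroOne (A : I → I → ℤ) : Prop := ∀ i j, A i j = 0 ∨ A i j = 1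

/-- The row `E_j`, with a single `1` in column `j` and `0` elsewhere. -/
def Erow [DecidableEq I] (j : I) : I → ℤ := fun j' => if j' = j then 1 else 0

/-- `B` is the primitive transfer of the 0–1 matrix `A` at `p` with data `(M, K)`:
`M` and `K` are disjoint, `p ∉ M`, the row `A_p` equals `∑_{m ∈ M} A_m + ∑_{k ∈ K} E_k`,
and `B` agrees with `A` away from row `p` while `B_p = ∑_{m ∈ M} E_m + ∑_{k ∈ K} E_k`. -/
def IsPrimTransfer [Fintype I] [DecidableEq I] (A : I → I → ℤ) (p : I)
    (M K : Finset I) (B : I → I → ℤ) : Prop :=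
  ZeroOne A ∧ Disjoint M K ∧ p ∉ M ∧
    (∀ j, A p j = (∑ m ∈ M, A m j) + ∑ k ∈ K, Erow k j) ∧
    (∀ i, i ≠ p → ∀ j, B i j = A i j) ∧
    (∀ j, B p j = (∑ m ∈ M, Erow m j) + ∑ k ∈ K, Erow k j)

/-- One step in the definition of primitive equivalence: a primitive transfer in either
direction, or conjugation by a permutation matrix. -/
def PrimStep [Fintype I] [DecidableEq I] (A B : I → I → ℤ) : Prop :=
  (∃ (p : I) (M K : Finset I), IsPrimTransfer A p M K B) ∨
  (∃ (p : I) (M K : Finset I), IsPrimTransfer B p M K A) ∨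
  (∃ σ : Equiv.Perm I, ∀ i j, A i j = B (σ i) (σ j))

/-- One step where any primitive transfer is required to have size `1`. -/
def SizeOnePrimStep [Fintype I] [DecidableEq I] (A B : I → I → ℤ) : Prop :=
  (∃ (p : I) (M K : Finset I), IsPrimTransfer A p M K B ∧ M.card = 1) ∨
  (∃ (p : I) (M K : Finset I), IsPrimTransfer B p M K A ∧ M.card = 1) ∨
  (∃ σ : Equiv.Perm I, ∀ i j, A i j = B (σ i) (σ j))

/-- A chain of 0–1 matrices from `A` to `B` whose consecutive members are related by `R`. -/
def Chain [Fintype I] [DecidableEq I] (R : (I → I → ℤ) → (I → I → ℤ) → Prop)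
    (A B : I → I → ℤ) : Prop :=
  ∃ (n : ℕ) (C : ℕ → I → I → ℤ), C 0 = A ∧ C n = B ∧
    (∀ i ≤ n, ZeroOne (C i)) ∧ ∀ i < n, R (C i) (C (i + 1))

section Aux

variable [Fintype I] [DecidableEq I]

lemma sumErow (K : Finset I) (j : I) : (∑ k ∈ K, Erow k j) = if j ∈ K then 1 else 0 := by
  simp [Erow, Finset.sum_ite_eq]

/-- Single size-one step between 0–1 matrices. -/
def SOS (X Y : I → I → ℤ) : Prop := ZeroOne X ∧ ZeroOne Y ∧ SizeOnePrimStep X Y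

/-- Reflexive-transitive closure of `SOS`. -/
def PE (X Y : I → I → ℤ) : Prop := Relation.ReflTransGen SOS X Y

lemma sizeOne_symm {X Y : I → I → ℤ} (h : SizeOnePrimStep X Y) : SizeOnePrimStep Y X := by
  rcases h with h | h | ⟨σ, h⟩
  · exact Or.inr (Or.inl h)
  · exact Or.inl h
  · refine Or.inr (Or.inr ⟨σ⁻¹, fun i j => ?_⟩)
    have := h (σ⁻¹ i) (σ⁻¹ j)
    simpa using this.symm

lemma SOS_symm : Symmetric (SOS (I := I)) := fun _ _ h => ⟨h.2.1, h.1, sizeOne_symm h.2.2⟩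

lemma PE_symm {X Y : I → I → ℤ} (h : PE X Y) : PE Y X :=
  (@Relation.ReflTransGen.stdSymm _ _ ⟨fun _ _ h' => SOS_symm h'⟩).symm _ _ h

lemma transfer_PE : ∀ (n : ℕ) (M : Finset I) (A B : I → I → ℤ) (p : I) (K : Finset I),
    M.card = n → ZeroOne B → IsPrimTransfer A p M K B → PE A B := by
  intro n
  induction n with
  | zero =>
    intro M A B p K hM hB hT
    obtain ⟨hA, hdis, hpM, hrow, hoff, hBp⟩ := hT
    have hMe : M = ∅ := Finset.card_eq_zero.mp hM
    subst hMe
    have heq : A = B := by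
      funext i j
      by_cases hip : i = p
      · subst hip
        rw [hBp j, hrow j]
        simp
      · exact (hoff i hip j).symm
    rw [heq]
    exact Relation.ReflTransGen.refl
  | succ n ih =>
    intro M A B p K hM hB hT
    obtain ⟨hA, hdis, hpM, hrow, hoff, hBp⟩ := hT
    have hArow : ∀ j, A p j = (∑ m ∈ M, A m j) + (if j ∈ K then 1 else 0) := by
      intro j; rw [hrow j, sumErow]
    have hnonneg : ∀ i j, (0:ℤ) ≤ A i j := fun i j => by rcases hA i j with h | h <;> omega
    have hle1 : ∀ i j, A i j ≤ 1 := fun i j => by rcases hA i j with h | h <;> omega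
    have hmem_le : ∀ m ∈ M, ∀ j, A m j ≤ A p j := by
      intro m hm j
      have h1 : A m j ≤ ∑ m' ∈ M, A m' j :=
        Finset.single_le_sum (fun i _ => hnonneg i j) hm
      have h4 : (0:ℤ) ≤ if j ∈ K then 1 else 0 := by split <;> omega
      have h3 := hArow j
      linarith
    by_cases hgood : ∃ m ∈ M, A p m = 0 ∨ A m m = 1
    · -- case (a): peel a good element
      obtain ⟨m, hmM, hm⟩ := hgood
      have hpm : p ≠ m := fun h => hpM (h ▸ hmM)
      have hmK : m ∉ K := Finset.disjoint_left.mp hdis hmM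
      set K₁ : Finset I := Finset.univ.filter (fun j => A p j = 1 ∧ A m j = 0) with hK₁
      have hK₁mem : ∀ j, j ∈ K₁ ↔ (A p j = 1 ∧ A m j = 0) := by
        intro j; simp [hK₁]
      have hdiff : ∀ j, (if j ∈ K₁ then (1:ℤ) else 0) = A p j - A m j := by
        intro j
        have h1 := hmem_le m hmM j
        rcases hA p j with h | h <;> rcases hA m j with h' | h' <;>
          simp [hK₁mem, h, h'] <;> omega
      have hmK₁ : m ∉ K₁ := by
        rw [hK₁mem]; rintro ⟨h1, h2⟩; rcases hm with h | h <;> omega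
      set D : I → I → ℤ := fun i j => if i = p then Erow m j + (if j ∈ K₁ then 1 else 0) else A i j
        with hD
      have hDoff : ∀ i, i ≠ p → ∀ j, D i j = A i j := by intro i hi j; simp [hD, hi]
      have hDp : ∀ j, D p j = Erow m j + (if j ∈ K₁ then 1 else 0) := by intro j; simp [hD]
      have hZD : ZeroOne D := by
        intro i j
        by_cases hi : i = p
        · subst hi
          rw [hDp]
          unfold Erow
          by_cases hj : j = m
        -- j = m : value 1 + 0
          · subst hj; simp [hmK₁]
          · simp only [if_neg hj, zero_add]
            split <;> omega
        · rw [hDoff i hi]; exact hA i j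
      have step1 : SOS A D := by
        refine ⟨hA, hZD, Or.inl ⟨p, {m}, K₁, ⟨hA, ?_, ?_, ?_, hDoff, ?_⟩,
          Finset.card_singleton m⟩⟩
        · simpa [Finset.disjoint_singleton_left] using hmK₁
        · simpa using hpm
        · intro j
          rw [Finset.sum_singleton, sumErow, hdiff j]; ring
        · intro j; rw [hDp, Finset.sum_singleton, sumErow]
      have hcard' : (M.erase m).card = n := by
        rw [Finset.card_erase_of_mem hmM, hM]; rfl
      have hT2 : IsPrimTransfer D p (M.erase m) (insert m K) B := by
        refine ⟨hZD, ?_, ?_, ?_, ?_, ?_⟩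
        · rw [Finset.disjoint_insert_right]
          exact ⟨Finset.notMem_erase m M,
            Finset.disjoint_of_subset_left (Finset.erase_subset m M) hdis⟩
        · exact fun h => hpM (Finset.mem_of_mem_erase h)
        · intro j
          have hsplit : A m j + ∑ m' ∈ M.erase m, A m' j = ∑ m' ∈ M, A m' j :=
            Finset.add_sum_erase M (fun m' => A m' j) hmM
          have hDm' : ∑ m' ∈ M.erase m, D m' j = ∑ m' ∈ M.erase m, A m' j := by
            refine Finset.sum_congr rfl ?_
            intro x hx
            exact hDoff x (fun hxp => hpM (hxp ▸ Finset.mem_of_mem_erase hx)) j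
          have h7 := hArow j
          rw [hDp, hDm', Finset.sum_insert hmK, sumErow, hdiff j]
          linarith
        · intro i hi j; rw [hoff i hi j, ← hDoff i hi j]
        · intro j
          rw [hBp j, Finset.sum_insert hmK]
          have hs := Finset.add_sum_erase M (fun m' => Erow m' j) hmM
          linarith
      exact Relation.ReflTransGen.head step1 (ih (M.erase m) D B p (insert m K) hcard' hB hT2)
    · -- case (b): every element is bad; duplication trick
      push_neg at hgood
      have hbad : ∀ m ∈ M, A p m = 1 ∧ A m m = 0 := by
        intro m hm
        obtain ⟨h1, h2⟩ := hgood m hm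
        rcases hA p m with h | h
        · exact absurd h h1
        · rcases hA m m with h' | h'
          · exact ⟨h, h'⟩
          · exact absurd h' h2
      have hMne : M.Nonempty := Finset.card_pos.mp (by omega)
      obtain ⟨c₁, hc₁⟩ := hMne
      have hAc₁c₁ : A c₁ c₁ = 0 := (hbad c₁ hc₁).2
      have hc₁K : c₁ ∉ K := Finset.disjoint_left.mp hdis hc₁
      have hsum1 : ∑ m ∈ M, A m c₁ = 1 := by
        have h := hArow c₁
        rw [if_neg hc₁K] at h
        have := (hbad c₁ hc₁).1
        omega
      have hex : ∃ c₂ ∈ M, A c₂ c₁ = 1 := by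
        by_contra hno
        push_neg at hno
        have : ∑ m ∈ M, A m c₁ = 0 := Finset.sum_eq_zero (fun m hm => by
          rcases hA m c₁ with h | h
          · exact h
          · exact absurd h (hno m hm))
        omega
      obtain ⟨c₂, hc₂M, hc₂c₁⟩ := hex
      have hne : c₂ ≠ c₁ := fun h => by rw [h, hAc₁c₁] at hc₂c₁; omega
      have hpc₂ : c₂ ≠ p := fun h => hpM (h ▸ hc₂M)
      have hpc₁ : c₁ ≠ p := fun h => hpM (h ▸ hc₁)
      have hpair : ∀ j, A c₁ j + A c₂ j ≤ A p j := by
        intro j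
        have h1 : A c₂ j ≤ ∑ m ∈ M.erase c₁, A m j :=
          Finset.single_le_sum (fun i _ => hnonneg i j) (Finset.mem_erase.mpr ⟨hne, hc₂M⟩)
        have h2 : A c₁ j + ∑ m ∈ M.erase c₁, A m j = ∑ m ∈ M, A m j :=
          Finset.add_sum_erase M (fun m => A m j) hc₁
        have h3 := hArow j
        have h4 : (0:ℤ) ≤ if j ∈ K then 1 else 0 := by split <;> omega
        linarith
      have hdisj12 : ∀ j, A c₂ j = 1 → A c₁ j = 0 := by
        intro j h
        have h1 := hpair j
        have h2 := hle1 p j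
        have h3 := hnonneg c₁ j
        omega
      set S : Finset I := Finset.univ.filter (fun j => A c₂ j = 1 ∧ j ≠ c₁) with hS
      have hSmem : ∀ j, j ∈ S ↔ (A c₂ j = 1 ∧ j ≠ c₁) := by intro j; simp [hS]
      have hc₁S : c₁ ∉ S := by simp [hSmem]
      have hAc₂eq : ∀ j, A c₂ j = Erow c₁ j + (if j ∈ S then 1 else 0) := by
        intro j
        unfold Erow
        by_cases hj : j = c₁
        · subst hj; simp [hSmem, hc₂c₁]
        · rcases hA c₂ j with h | h <;> simp [hSmem, hj, h]
      set X : I → I → ℤ := fun i j => if i = c₂ then A c₁ j + (if j ∈ S then 1 else 0) else A i j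
        with hX
      have hXoff : ∀ i, i ≠ c₂ → ∀ j, X i j = A i j := fun i hi j => by simp [hX, hi]
      have hXc₂ : ∀ j, X c₂ j = A c₁ j + (if j ∈ S then 1 else 0) := fun j => by simp [hX]
      have hZX : ZeroOne X := by
        intro i j
        by_cases hi : i = c₂
        · subst hi
          rw [hXc₂]
          by_cases hj : j ∈ S
          · have h1 := ((hSmem j).mp hj).1
            have h2 := hdisj12 j h1
            rw [h2, if_pos hj]
            right; ring
          · rw [if_neg hj, add_zero]; exact hA c₁ j
        · rw [hXoff i hi]; exact hA i j
      have hT1 : IsPrimTransfer X c₂ {c₁} S A := by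
        refine ⟨hZX, ?_, ?_, ?_, ?_, ?_⟩
        · simpa [Finset.disjoint_singleton_left] using hc₁S
        · simpa using hne
        · intro j
          rw [Finset.sum_singleton, sumErow, hXc₂ j, hXoff c₁ (Ne.symm hne) j]
        · intro i hi j; exact (hXoff i hi j).symm
        · intro j; rw [Finset.sum_singleton, sumErow]; exact hAc₂eq j
      have step1 : SOS A X :=
        ⟨hA, hZX, Or.inr (Or.inl ⟨c₂, {c₁}, S, hT1, Finset.card_singleton c₁⟩)⟩
      set B' : I → I → ℤ := fun i j => if i = p then B p j else X i j with hB'def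
      have hB'p : ∀ j, B' p j = B p j := fun j => by simp [hB'def]
      have hB'off : ∀ i, i ≠ p → ∀ j, B' i j = X i j := fun i hi j => by simp [hB'def, hi]
      have hZB' : ZeroOne B' := by
        intro i j
        by_cases hi : i = p
        · rw [hi, hB'p]; exact hB p j
        · rw [hB'off i hi]; exact hZX i j
      have hc₂e : c₂ ∈ M.erase c₁ := Finset.mem_erase.mpr ⟨hne, hc₂M⟩
      have hT2 : IsPrimTransfer X p (M.erase c₁) (insert c₁ K) B' := by
        refine ⟨hZX, ?_, ?_, ?_, ?_, ?_⟩
        · rw [Finset.disjoint_insert_right]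
          exact ⟨Finset.notMem_erase c₁ M,
            Finset.disjoint_of_subset_left (Finset.erase_subset c₁ M) hdis⟩
        · exact fun h => hpM (Finset.mem_of_mem_erase h)
        · intro j
          have hXp : X p j = A p j := hXoff p (Ne.symm hpc₂) j
          have hsplit1 : X c₂ j + ∑ m ∈ (M.erase c₁).erase c₂, X m j
              = ∑ m ∈ M.erase c₁, X m j := Finset.add_sum_erase _ (fun m => X m j) hc₂e
          have hsplit2 : A c₂ j + ∑ m ∈ (M.erase c₁).erase c₂, A m j
              = ∑ m ∈ M.erase c₁, A m j := Finset.add_sum_erase _ (fun m => A m j) hc₂e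
          have hsplit3 : A c₁ j + ∑ m ∈ M.erase c₁, A m j = ∑ m ∈ M, A m j :=
            Finset.add_sum_erase M (fun m => A m j) hc₁
          have hcongr : ∑ m ∈ (M.erase c₁).erase c₂, X m j
              = ∑ m ∈ (M.erase c₁).erase c₂, A m j :=
            Finset.sum_congr rfl (fun x hx => hXoff x (Finset.ne_of_mem_erase hx) j)
          have h5 := hAc₂eq j
          have h6 := hXc₂ j
          have h7 := hArow j
          rw [Finset.sum_insert hc₁K, sumErow, hXp]
          have hErowc₁ : Erow c₁ j = if j = c₁ then 1 else 0 := rfl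
          linarith
        · intro i hi j; rw [hB'off i hi j]
        · intro j
          rw [hB'p, hBp j, Finset.sum_insert hc₁K]
          have hs := Finset.add_sum_erase M (fun m => Erow m j) hc₁
          linarith
      have hcard' : (M.erase c₁).card = n := by
        rw [Finset.card_erase_of_mem hc₁, hM]; rfl
      have chain2 : PE X B' := ih (M.erase c₁) X B' p (insert c₁ K) hcard' hZB' hT2
      have hT3 : IsPrimTransfer B' c₂ {c₁} S B := by
        refine ⟨hZB', ?_, ?_, ?_, ?_, ?_⟩
        · simpa [Finset.disjoint_singleton_left] using hc₁S
        · simpa using hne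
        · intro j
          rw [Finset.sum_singleton, sumErow, hB'off c₂ hpc₂ j, hXc₂,
            hB'off c₁ hpc₁ j, hXoff c₁ (Ne.symm hne) j]
        · intro i hi j
          by_cases hip : i = p
          · subst hip; rw [hB'p]
          · rw [hB'off i hip j, hXoff i hi j, hoff i hip j]
        · intro j
          rw [Finset.sum_singleton, sumErow, hoff c₂ hpc₂ j]
          exact hAc₂eq j
      have step3 : SOS B' B :=
        ⟨hZB', hB, Or.inl ⟨c₂, {c₁}, S, hT3, Finset.card_singleton c₁⟩⟩
      exact (Relation.ReflTransGen.head step1 chain2).tail step3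

lemma primStep_PE {A B : I → I → ℤ} (hA : ZeroOne A) (hB : ZeroOne B)
    (h : PrimStep A B) : PE A B := by
  rcases h with ⟨p, M, K, hT⟩ | ⟨p, M, K, hT⟩ | ⟨σ, hσ⟩
  · exact transfer_PE M.card M A B p K rfl hB hT
  · exact PE_symm (transfer_PE M.card M B A p K rfl hA hT)
  · exact Relation.ReflTransGen.single ⟨hA, hB, Or.inr (Or.inr ⟨σ, hσ⟩)⟩

lemma chain_of_PE {A B : I → I → ℤ} (hA : ZeroOne A) (h : PE A B) :
    Chain SizeOnePrimStep A B := by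
  induction h with
  | refl =>
    exact ⟨0, fun _ => A, rfl, rfl, fun i _ => hA, fun i hi => absurd hi (Nat.not_lt_zero i)⟩
  | @tail b c hab hbc ihh =>
    obtain ⟨n, C, h0, h1, hz, hs⟩ := ihh
    obtain ⟨hzb, hzc, hstep⟩ := hbc
    refine ⟨n + 1, fun i => if i ≤ n then C i else c, by simp [h0], by simp, ?_, ?_⟩
    · intro i hi
      by_cases hin : i ≤ n
      · simpa [hin] using hz i hin
      · simpa [hin] using hzc
    · intro i hi
      by_cases hin : i < n
      · have h1' : i ≤ n := le_of_lt hin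
        have h2' : i + 1 ≤ n := hin
        simpa [h1', h2'] using hs i hin
      · have hieq : i = n := by omega
        have h2' : ¬ (i + 1 ≤ n) := by omega
        have h1' : i ≤ n := by omega
        simpa [h1', h2', hieq, h1] using hstep

lemma PE_of_chain {R : (I → I → ℤ) → (I → I → ℤ) → Prop}
    (hR : ∀ X Y, ZeroOne X → ZeroOne Y → R X Y → PE X Y)
    {A B : I → I → ℤ} (h : Chain R A B) : PE A B := by
  obtain ⟨n, C, h0, h1, hz, hs⟩ := h
  subst h0; subst h1
  have key : ∀ k, k ≤ n → PE (C 0) (C k) := by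
    intro k
    induction k with
    | zero => intro _; exact Relation.ReflTransGen.refl
    | succ k ihk =>
      intro hk
      exact (ihk (by omega)).trans
        (hR (C k) (C (k + 1)) (hz k (by omega)) (hz (k + 1) hk) (hs k (by omega)))
  exact key n le_rfl

lemma sizeOne_to_prim {X Y : I → I → ℤ} (h : SizeOnePrimStep X Y) : PrimStep X Y := by
  rcases h with ⟨p, M, K, hT, _⟩ | ⟨p, M, K, hT, _⟩ | ⟨σ, hσ⟩
  · exact Or.inl ⟨p, M, K, hT⟩
  · exact Or.inr (Or.inl ⟨p, M, K, hT⟩)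
  · exact Or.inr (Or.inr ⟨σ, hσ⟩)

end Aux

theorem stmt12 {I : Type*} [Fintype I] [DecidableEq I]
    (A B : I → I → ℤ) (hA : ZeroOne A) (hB : ZeroOne B) :
    Chain PrimStep A B ↔ Chain SizeOnePrimStep A B := by
  constructor
  · intro h
    exact chain_of_PE hA (PE_of_chain (fun X Y hX hY hXY => primStep_PE hX hY hXY) h)
  · intro h
    obtain ⟨n, C, h0, h1, hz, hs⟩ := h
    exact ⟨n, C, h0, h1, hz, fun i hi => sizeOne_to_prim (hs i hi)⟩
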